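/- arXiv:1710.03604 — 4 statements merged into one kernel-verified Lean document; each statement's English description precedes it below -/
import Mathlib

section
/- Let L ≥ 0 and let F : ℝ → ℝ be twice continuously differentiable with |F''(x)| ≤ L for all x ∈ ℝ. Then for all real numbers a, b, c, writing m := (3/2)b − (1/2)c, one has F(a) − F(b) − F'(m)·(a − b) ≤ (L/4)·((a − b)² + (a − 2b + c)²) + (L/4)·(b − c)². -/
/-!
Write `m = (3/2) b - (1/2) c`. Since `|F''| ≤ L`, both `L/2 t² - F t` and `L/2 t² + F t` are convex,
and their tangent-line inequalities at `m` say that `F` deviates from its tangent line at `m` by at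
most `L/2 (t - m)²`. Applying this at `t = a` and `t = b` bounds the left-hand side by
`L/2 ((a - m)² + (b - m)²)`, and `a - m = ((a - b) + (a - 2b + c))/2`, `b - m = (c - b)/2`.
-/

open Set

theorem ConvexOn.add_deriv_mul_sub_le {φ : ℝ → ℝ} (hφ : ConvexOn ℝ univ φ) {x : ℝ}
    (hd : DifferentiableAt ℝ φ x) (y : ℝ) : φ x + deriv φ x * (y - x) ≤ φ y := by
  rcases lt_trichotomy x y with hxy | rfl | hyx
  · have := hφ.deriv_le_slope (mem_univ x) (mem_univ y) hxy hd
    rw [slope_def_field, le_div_iff₀ (sub_pos.2 hxy)] at this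
    linarith
  · simp
  · have := hφ.slope_le_deriv (mem_univ y) (mem_univ x) hyx hd
    rw [slope_def_field, div_le_iff₀ (sub_pos.2 hyx)] at this
    linarith

theorem sub_sub_deriv_mul_le_of_deriv2_le {F : ℝ → ℝ} (hF : Differentiable ℝ F)
    (hF' : Differentiable ℝ (deriv F)) {L : ℝ} (hF'' : ∀ x, deriv (deriv F) x ≤ L) (x y : ℝ) :
    F y - F x - deriv F x * (y - x) ≤ L / 2 * (y - x) ^ 2 := by
  set φ : ℝ → ℝ := fun t => L / 2 * t ^ 2 - F t
  have hφ' : deriv φ = fun t => L * t - deriv F t := by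
    funext t
    exact (((hasDerivAt_pow 2 t).const_mul (L / 2)).sub (hF t).hasDerivAt).deriv.trans (by ring)
  have hφ'' : ∀ t, deriv (deriv φ) t = L - deriv (deriv F) t := fun t => by
    rw [hφ']
    exact (((hasDerivAt_id t).const_mul L).sub (hF' t).hasDerivAt).deriv.trans (by simp)
  have hφd : Differentiable ℝ φ := by fun_prop
  have hφconvex : ConvexOn ℝ univ φ := by
    refine convexOn_univ_of_deriv2_nonneg hφd (by rw [hφ']; fun_prop) fun t => ?_
    simpa [hφ''] using hF'' t
  have := hφconvex.add_deriv_mul_sub_le (hφd x) y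
  simp only [φ, hφ'] at this
  linear_combination this

theorem abs_sub_sub_deriv_mul_le_of_abs_deriv2_le {F : ℝ → ℝ} (hF : ContDiff ℝ 2 F) {L : ℝ}
    (hF'' : ∀ x, |deriv (deriv F) x| ≤ L) (x y : ℝ) :
    |F y - F x - deriv F x * (y - x)| ≤ L / 2 * (y - x) ^ 2 := by
  have hFd : Differentiable ℝ F := hF.differentiable two_ne_zero
  have hF'd : Differentiable ℝ (deriv F) := (hF.deriv' (n := 1)).differentiable one_ne_zero
  rw [abs_le]
  constructor
  · have := sub_sub_deriv_mul_le_of_deriv2_le (L := L) hFd.neg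
      (by simpa [deriv.neg'] using hF'd.neg)
      (fun t => by simpa [deriv.neg'] using (neg_le_abs _).trans (hF'' t)) x y
    simp only [Pi.neg_apply, deriv.neg'] at this
    linarith
  · exact sub_sub_deriv_mul_le_of_deriv2_le hFd hF'd (fun t => (le_abs_self _).trans (hF'' t)) x y

theorem stmt_0_general (L : ℝ) (F : ℝ → ℝ) (hF : ContDiff ℝ 2 F)
    (hF'' : ∀ x : ℝ, |deriv (deriv F) x| ≤ L) (a b c : ℝ) :
    F a - F b - deriv F ((3/2) * b - (1/2) * c) * (a - b) ≤
      (L/4) * ((a - b)^2 + (a - 2*b + c)^2) + (L/4) * (b - c)^2 := by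
  have hL : 0 ≤ L := (abs_nonneg _).trans (hF'' 0)
  set m := (3/2) * b - (1/2) * c with hm
  have ha := le_of_abs_le (abs_sub_sub_deriv_mul_le_of_abs_deriv2_le hF hF'' m a)
  have hb := neg_le_of_abs_le (abs_sub_sub_deriv_mul_le_of_abs_deriv2_le hF hF'' m b)
  have hsplit : F a - F b - deriv F m * (a - b) =
      (F a - F m - deriv F m * (a - m)) - (F b - F m - deriv F m * (b - m)) := by ring
  have hquad : L / 2 * (a - m) ^ 2 + L / 2 * (b - m) ^ 2 ≤
      (L/4) * ((a - b)^2 + (a - 2*b + c)^2) + (L/4) * (b - c)^2 := by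
    rw [hm]
    linear_combination (1 / 8) * mul_nonneg hL (sq_nonneg ((a - b) - (a - 2*b + c))) +
      (1 / 8) * mul_nonneg hL (sq_nonneg (b - c))
  linarith

/-- Pointwise secant/Taylor inequality underlying the treatment of the explicitly
extrapolated nonlinear force in the SL-CN scheme. -/
theorem stmt_0 (L : ℝ) (hL : 0 ≤ L) (F : ℝ → ℝ) (hF : ContDiff ℝ 2 F)
    (hF'' : ∀ x : ℝ, |deriv (deriv F) x| ≤ L) (a b c : ℝ) :
    F a - F b - deriv F ((3/2) * b - (1/2) * c) * (a - b) ≤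
      (L/4) * ((a - b)^2 + (a - 2*b + c)^2) + (L/4) * (b - c)^2 :=
  stmt_0_general L F hF hF'' a b c
end

section
/- Under the conditions A ≥ L²γ/(16ε²) and B ≥ L/(2ε), the SL-CN scheme satisfies the discrete energy dissipation law: for every n ≥ 1, E_CN^{n+1} ≤ E_CN^n − (2√(A/γ) − L/(2ε))‖δ_tφ^{n+1}‖² − (B/2 − L/(4ε))‖δ_{tt}φ^{n+1}‖². In particular, since both subtracted coefficients are nonnegative, E_CN^{n+1} ≤ E_CN^n for all n ≥ 1, i.e. the scheme is unconditionally energy stable (no restriction on the time step τ). -/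
open scoped RealInnerProductSpace
open Finset

/-!
Pair the first equation of the scheme with `μ` and the second with `δφ = φⁿ⁺¹ - φⁿ`. Symmetry of `K`
turns the Crank–Nicolson term into the difference of the quadratic energies, and polarization turns
the `B`-term into `(B/2)(‖δφⁿ⁺¹‖² - ‖δφⁿ‖² + ‖δₜₜφⁿ⁺¹‖²)`. Taylor expansion about the extrapolated
point `(3/2)φⁿ - (1/2)φⁿ⁻¹`, at `φⁿ⁺¹` and at `φⁿ`, bounds the difference of the nonlinear energies
by `⟪f(·), δφ⟫ + (L/4)(‖δφ‖² + ‖δₜₜφ‖²)`. Finally `‖δφ‖² = -τγ⟪Kμ, δφ⟫` and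
`0 ≤ ⟪K(√γ μ + √A δφ), √γ μ + √A δφ⟫` let the `Aτ`-term and `τγ⟪Kμ, μ⟫` pay for
`2√(A/γ)‖δφ‖²`.
-/

theorem ConvexOn.add_deriv_mul_sub_le_s2 {S : Set ℝ} {g : ℝ → ℝ} (hg : ConvexOn ℝ S g) {c x : ℝ}
    (hc : c ∈ S) (hx : x ∈ S) (hgc : DifferentiableAt ℝ g c) :
    g c + deriv g c * (x - c) ≤ g x := by
  rcases lt_trichotomy c x with h | rfl | h
  · have := hg.deriv_le_slope hc hx h hgc
    rw [slope_def_field, le_div_iff₀ (sub_pos.2 h)] at this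
    linarith
  · simp
  · have := hg.slope_le_deriv hx hc h hgc
    rw [slope_def_field, div_le_iff₀ (sub_pos.2 h)] at this
    linarith

theorem le_add_deriv_mul_add_sq_of_deriv2_le {G : ℝ → ℝ} (hG : Differentiable ℝ G)
    (hG' : Differentiable ℝ (deriv G)) {L : ℝ} (hG'' : ∀ x, deriv (deriv G) x ≤ L) (c x : ℝ) :
    G x ≤ G c + deriv G c * (x - c) + L / 2 * (x - c) ^ 2 := by
  set g : ℝ → ℝ := fun y => L / 2 * y ^ 2 - G y
  have hg : ∀ y, HasDerivAt g (L * y - deriv G y) y := fun y => by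
    refine (((hasDerivAt_pow 2 y).const_mul (L / 2)).fun_sub (hG y).hasDerivAt).congr_deriv ?_
    ring
  have hdg : deriv g = fun y => L * y - deriv G y := funext fun y => (hg y).deriv
  have hconv : ConvexOn ℝ Set.univ g := by
    refine convexOn_univ_of_deriv2_nonneg (fun y => (hg y).differentiableAt) ?_ fun y => ?_
    · rw [hdg]
      exact (differentiable_id.const_mul L).sub hG'
    · have := ((hasDerivAt_id' y).const_mul L).fun_sub (hG' y).hasDerivAt
      rw [Function.iterate_succ_apply, Function.iterate_one, hdg, this.deriv]
      linarith [hG'' y]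
  have htangent := hconv.add_deriv_mul_sub_le_s2 trivial trivial (hg c).differentiableAt (x := x)
  rw [hdg] at htangent
  linear_combination htangent

theorem sub_le_deriv_extrapolate_mul_add_sq {F : ℝ → ℝ} (hF : ContDiff ℝ 2 F) {L : ℝ}
    (hF'' : ∀ x, |deriv (deriv F) x| ≤ L) (u v w : ℝ) :
    F u - F v ≤ deriv F (3 / 2 * v - 1 / 2 * w) * (u - v)
      + L / 4 * ((u - v) ^ 2 + (u - 2 * v + w) ^ 2) := by
  have hF1 : Differentiable ℝ F := hF.differentiable (by norm_num)
  have hF2 : Differentiable ℝ (deriv F) :=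
    ((contDiff_succ_iff_deriv (n := 1)).mp hF).2.2.differentiable (by norm_num)
  have hnegF : deriv (-F) = -deriv F := deriv.neg'
  set c := 3 / 2 * v - 1 / 2 * w
  have upper := le_add_deriv_mul_add_sq_of_deriv2_le hF1 hF2 (fun x => (abs_le.1 (hF'' x)).2) c u
  have lower := le_add_deriv_mul_add_sq_of_deriv2_le hF1.neg (hnegF ▸ hF2.neg)
    (fun x => by rw [hnegF, deriv.neg]; linarith [(abs_le.1 (hF'' x)).1]) c v
  rw [hnegF] at lower
  simp only [Pi.neg_apply] at lower
  linear_combination upper + lower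

theorem sum_sub_sum_le_inner_deriv_extrapolate {ι : Type*} [Fintype ι] {F : ℝ → ℝ}
    (hF : ContDiff ℝ 2 F) {L : ℝ} (hF'' : ∀ x, |deriv (deriv F) x| ≤ L)
    (u v w : EuclideanSpace ℝ ι) :
    ∑ i, F (u i) - ∑ i, F (v i) ≤
      ⟪(WithLp.equiv 2 (ι → ℝ)).symm (fun i => deriv F ((3/2) * v i - (1/2) * w i)), u - v⟫
        + L / 4 * (‖u - v‖ ^ 2 + ‖u - (2:ℝ) • v + w‖ ^ 2) := by
  calc ∑ i, F (u i) - ∑ i, F (v i) = ∑ i, (F (u i) - F (v i)) := (sum_sub_distrib ..).symm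
    _ ≤ ∑ i, (deriv F (3 / 2 * v i - 1 / 2 * w i) * (u i - v i)
          + L / 4 * ((u i - v i) ^ 2 + (u i - 2 * v i + w i) ^ 2)) :=
        sum_le_sum fun i _ => sub_le_deriv_extrapolate_mul_add_sq hF hF'' (u i) (v i) (w i)
    _ = _ := by
        simp only [WithLp.equiv_symm_apply, PiLp.inner_apply, PiLp.sub_apply, PiLp.add_apply,
          PiLp.smul_apply, smul_eq_mul, RCLike.inner_apply, conj_trivial, EuclideanSpace.norm_sq_eq,
          Real.norm_eq_abs, sq_abs, sum_add_distrib, ← mul_sum, mul_comm]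

section
variable {E : Type*} [NormedAddCommGroup E] [InnerProductSpace ℝ E] {K : E →ₗ[ℝ] E}

theorem LinearMap.IsSymmetric.inner_map_self_sub_inner_map_self (hK : K.IsSymmetric) (u v : E) :
    ⟪K u, u⟫ - ⟪K v, v⟫ = ⟪K (u + v), u - v⟫ := by
  have : ⟪K u, v⟫ = ⟪K v, u⟫ := by rw [hK, real_inner_comm]
  simp only [map_add, inner_add_left, inner_sub_right]
  linarith

theorem LinearMap.IsPositive.neg_two_mul_sqrt_mul_inner_le (hK : K.IsPositive) {p q : ℝ}
    (hp : 0 ≤ p) (hq : 0 ≤ q) (x y : E) :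
    -(2 * √(p * q) * ⟪K x, y⟫) ≤ p * ⟪K x, x⟫ + q * ⟪K y, y⟫ := by
  have hsymm : ⟪K y, x⟫ = ⟪K x, y⟫ := by rw [hK.isSymmetric, real_inner_comm]
  have := hK.inner_nonneg_left (√p • x + √q • y)
  simp only [map_add, map_smul, inner_add_left, inner_add_right, real_inner_smul_left,
    real_inner_smul_right, hsymm] at this
  rw [Real.sqrt_mul hp]
  linear_combination this + ⟪K x, x⟫ * Real.sq_sqrt hp + ⟪K y, y⟫ * Real.sq_sqrt hq

theorem LinearMap.IsPositive.two_mul_sqrt_div_mul_norm_sq_le (hK : K.IsPositive) {τ γ A : ℝ}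
    (hτ : 0 ≤ τ) (hγ : 0 ≤ γ) (hA : 0 ≤ A) {μ a : E} (ha : a = -(τ * γ) • K μ) :
    2 * √(A / γ) * ‖a‖ ^ 2 ≤ τ * γ * ⟪K μ, μ⟫ + A * τ * ⟪K a, a⟫ := by
  have hnorm : ‖a‖ ^ 2 = -(τ * γ) * ⟪K μ, a⟫ := by
    rw [← real_inner_self_eq_norm_sq]
    nth_rewrite 2 [ha]
    rw [real_inner_smul_right, real_inner_comm]
  have hsqrt : √(A / γ) * γ = √(γ * A) := by
    calc √(A / γ) * γ = √(A / γ) * √(γ ^ 2) := by rw [Real.sqrt_sq hγ]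
      _ = √(γ * A) := by
        rw [← Real.sqrt_mul' _ (sq_nonneg γ)]
        rcases eq_or_ne γ 0 with rfl | h
        · simp
        · field_simp
  have := hK.neg_two_mul_sqrt_mul_inner_le hγ hA μ a
  rw [hnorm]
  linear_combination mul_le_mul_of_nonneg_left this hτ + (-2 * τ * ⟪K μ, a⟫) * hsqrt
end

section Scheme
variable {ι : Type*} [Fintype ι]

noncomputable def discreteEnergy (K : EuclideanSpace ℝ ι →ₗ[ℝ] EuclideanSpace ℝ ι) (F : ℝ → ℝ)
    (ε : ℝ) (φ : EuclideanSpace ℝ ι) : ℝ :=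
  ε / 2 * ⟪K φ, φ⟫ + 1 / ε * ∑ i, F (φ i)

noncomputable def modifiedEnergy (K : EuclideanSpace ℝ ι →ₗ[ℝ] EuclideanSpace ℝ ι) (F : ℝ → ℝ)
    (ε L B : ℝ) (φ φ₀ : EuclideanSpace ℝ ι) : ℝ :=
  discreteEnergy K F ε φ + (L / (4 * ε) + B / 2) * ‖φ - φ₀‖ ^ 2

theorem modifiedEnergy_le_sub {K : EuclideanSpace ℝ ι →ₗ[ℝ] EuclideanSpace ℝ ι}
    (hK : K.IsPositive) {F : ℝ → ℝ} (hF : ContDiff ℝ 2 F) {L : ℝ} (hL : 0 ≤ L)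
    (hF'' : ∀ x, |deriv (deriv F) x| ≤ L) {τ γ ε A B : ℝ} (hτ : 0 ≤ τ) (hγ : 0 ≤ γ) (hε : 0 < ε)
    (hA : 0 ≤ A) {u v w μ : EuclideanSpace ℝ ι} (hφ : u - v = -(τ * γ) • K μ)
    (hμ : μ = ε • K ((1/2 : ℝ) • (u + v)) +
      (1/ε) • ((WithLp.equiv 2 (ι → ℝ)).symm
          (fun i => deriv F ((3/2) * v i - (1/2) * w i))) +
      (A * τ) • K (u - v) + B • (u - (2:ℝ) • v + w)) :
    modifiedEnergy K F ε L B u v ≤ modifiedEnergy K F ε L B v w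
      - (2 * √(A / γ) - L / (2 * ε)) * ‖u - v‖ ^ 2
      - (B / 2 - L / (4 * ε)) * ‖u - (2:ℝ) • v + w‖ ^ 2 := by
  set d := u - (2:ℝ) • v + w
  have hμ_inner : ⟪μ, u - v⟫ = -(τ * γ) * ⟪K μ, μ⟫ := by
    rw [hφ, real_inner_smul_right, hK.isSymmetric]
  have hμ_inner' := congrArg (⟪·, u - v⟫) hμ
  simp only [inner_add_left, real_inner_smul_left, map_smul] at hμ_inner'
  have hkinetic := hK.isSymmetric.inner_map_self_sub_inner_map_self u v
  have hpolar : 2 * ⟪d, u - v⟫ = ‖u - v‖ ^ 2 + ‖d‖ ^ 2 - ‖v - w‖ ^ 2 := by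
    rw [show v - w = (u - v) - d by module,
      norm_sub_sq_real (u - v), real_inner_comm]
    ring
  have hpotential := mul_le_mul_of_nonneg_left
    (sum_sub_sum_le_inner_deriv_extrapolate hF hF'' u v w) (one_div_nonneg.2 hε.le)
  have hstab := hK.two_mul_sqrt_div_mul_norm_sq_le hτ hγ hA hφ
  have hdropped : 0 ≤ L / (4 * ε) * ‖v - w‖ ^ 2 := by positivity
  unfold modifiedEnergy discreteEnergy
  linear_combination hpotential + hstab + hdropped + ε / 2 * hkinetic
    + (hμ_inner - hμ_inner') - B / 2 * hpolar

end Scheme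

theorem stmt_2_general {M : ℕ}
    (K : EuclideanSpace ℝ (Fin M) →ₗ[ℝ] EuclideanSpace ℝ (Fin M))
    (hKsa : ∀ x y : EuclideanSpace ℝ (Fin M), ⟪K x, y⟫ = ⟪x, K y⟫)
    (hKpsd : ∀ x : EuclideanSpace ℝ (Fin M), 0 ≤ ⟪K x, x⟫)
    (F : ℝ → ℝ) (hF : ContDiff ℝ 2 F)
    (L : ℝ) (hL : 0 ≤ L) (hf' : ∀ x : ℝ, |deriv (deriv F) x| ≤ L)
    (τ γ ε : ℝ) (hτ : 0 < τ) (hγ : 0 < γ) (hε : 0 < ε)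
    (A B : ℝ) (hA : 0 ≤ A)
    (φ μc : ℕ → EuclideanSpace ℝ (Fin M))
    (hscheme1 : ∀ n, 1 ≤ n → (1/τ) • (φ (n+1) - φ n) = -γ • K (μc n))
    (hscheme2 : ∀ n, 1 ≤ n → μc n =
      ε • K ((1/2 : ℝ) • (φ (n+1) + φ n)) +
      (1/ε) • ((WithLp.equiv 2 (Fin M → ℝ)).symm
          (fun i => deriv F ((3/2) * φ n i - (1/2) * φ (n-1) i))) +
      (A * τ) • K (φ (n+1) - φ n) +
      B • (φ (n+1) - (2:ℝ) • φ n + φ (n-1)))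
    (hAcond : A ≥ L^2 * γ / (16 * ε^2)) (hBcond : B ≥ L / (2 * ε)) :
    ∀ n, 1 ≤ n →
      ((ε/2) * ⟪K (φ (n+1)), φ (n+1)⟫ + (1/ε) * ∑ i, F (φ (n+1) i)
          + (L/(4*ε) + B/2) * ‖φ (n+1) - φ n‖^2
        ≤ (ε/2) * ⟪K (φ n), φ n⟫ + (1/ε) * ∑ i, F (φ n i)
          + (L/(4*ε) + B/2) * ‖φ n - φ (n-1)‖^2
          - (2 * Real.sqrt (A/γ) - L/(2*ε)) * ‖φ (n+1) - φ n‖^2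
          - (B/2 - L/(4*ε)) * ‖φ (n+1) - (2:ℝ) • φ n + φ (n-1)‖^2)
      ∧
      ((ε/2) * ⟪K (φ (n+1)), φ (n+1)⟫ + (1/ε) * ∑ i, F (φ (n+1) i)
          + (L/(4*ε) + B/2) * ‖φ (n+1) - φ n‖^2
        ≤ (ε/2) * ⟪K (φ n), φ n⟫ + (1/ε) * ∑ i, F (φ n i)
          + (L/(4*ε) + B/2) * ‖φ n - φ (n-1)‖^2) := by
  have hK : K.IsPositive := ⟨hKsa, hKpsd⟩
  intro n hn
  have hstep : φ (n+1) - φ n = -(τ * γ) • K (μc n) := by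
    rw [← smul_right_inj (one_div_pos.2 hτ).ne', hscheme1 n hn, smul_smul]
    congr 1
    field_simp
  have hdecay := modifiedEnergy_le_sub hK hF hL hf' hτ.le hγ.le hε hA hstep (hscheme2 n hn)
  have hsqrt : L / (4 * ε) ≤ √(A / γ) := by
    refine Real.le_sqrt_of_sq_le ?_
    rw [le_div_iff₀ hγ]
    calc (L / (4 * ε)) ^ 2 * γ = L ^ 2 * γ / (16 * ε ^ 2) := by ring
      _ ≤ A := hAcond
  have hdiss₁ : 0 ≤ (2 * √(A / γ) - L / (2 * ε)) * ‖φ (n+1) - φ n‖ ^ 2 := by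
    refine mul_nonneg ?_ (sq_nonneg _)
    linarith [show L / (2 * ε) = 2 * (L / (4 * ε)) by ring]
  have hdiss₂ : 0 ≤ (B / 2 - L / (4 * ε)) * ‖φ (n+1) - (2:ℝ) • φ n + φ (n-1)‖ ^ 2 := by
    refine mul_nonneg ?_ (sq_nonneg _)
    linarith [show L / (4 * ε) = L / (2 * ε) / 2 by ring]
  unfold modifiedEnergy discreteEnergy at hdecay
  exact ⟨hdecay, by linarith⟩

/-- Discrete energy dissipation law for the stabilized linear Crank–Nicolson (SL-CN)
scheme for the Cahn–Hilliard equation (Theorem 2.1): under the stabilization conditions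
`A ≥ L²γ/(16ε²)` and `B ≥ L/(2ε)` the modified energy decays at every step,
unconditionally in the time step `τ`. -/
theorem stmt_2 {M : ℕ}
    (K : EuclideanSpace ℝ (Fin M) →ₗ[ℝ] EuclideanSpace ℝ (Fin M))
    (hKsa : ∀ x y : EuclideanSpace ℝ (Fin M), ⟪K x, y⟫ = ⟪x, K y⟫)
    (hKpsd : ∀ x : EuclideanSpace ℝ (Fin M), 0 ≤ ⟪K x, x⟫)
    (F : ℝ → ℝ) (hF : ContDiff ℝ 2 F)
    (L : ℝ) (hL : 0 ≤ L) (hf' : ∀ x : ℝ, |deriv (deriv F) x| ≤ L)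
    (τ γ ε : ℝ) (hτ : 0 < τ) (hγ : 0 < γ) (hε : 0 < ε)
    (A B : ℝ) (hA : 0 ≤ A) (hB : 0 ≤ B)
    (φ μc : ℕ → EuclideanSpace ℝ (Fin M))
    (hscheme1 : ∀ n, 1 ≤ n → (1/τ) • (φ (n+1) - φ n) = -γ • K (μc n))
    (hscheme2 : ∀ n, 1 ≤ n → μc n =
      ε • K ((1/2 : ℝ) • (φ (n+1) + φ n)) +
      (1/ε) • ((WithLp.equiv 2 (Fin M → ℝ)).symm
          (fun i => deriv F ((3/2) * φ n i - (1/2) * φ (n-1) i))) +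
      (A * τ) • K (φ (n+1) - φ n) +
      B • (φ (n+1) - (2:ℝ) • φ n + φ (n-1)))
    (hAcond : A ≥ L^2 * γ / (16 * ε^2)) (hBcond : B ≥ L / (2 * ε)) :
    ∀ n, 1 ≤ n →
      ((ε/2) * ⟪K (φ (n+1)), φ (n+1)⟫ + (1/ε) * ∑ i, F (φ (n+1) i)
          + (L/(4*ε) + B/2) * ‖φ (n+1) - φ n‖^2
        ≤ (ε/2) * ⟪K (φ n), φ n⟫ + (1/ε) * ∑ i, F (φ n i)
          + (L/(4*ε) + B/2) * ‖φ n - φ (n-1)‖^2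
          - (2 * Real.sqrt (A/γ) - L/(2*ε)) * ‖φ (n+1) - φ n‖^2
          - (B/2 - L/(4*ε)) * ‖φ (n+1) - (2:ℝ) • φ n + φ (n-1)‖^2)
      ∧
      ((ε/2) * ⟪K (φ (n+1)), φ (n+1)⟫ + (1/ε) * ∑ i, F (φ (n+1) i)
          + (L/(4*ε) + B/2) * ‖φ (n+1) - φ n‖^2
        ≤ (ε/2) * ⟪K (φ n), φ n⟫ + (1/ε) * ∑ i, F (φ n i)
          + (L/(4*ε) + B/2) * ‖φ n - φ (n-1)‖^2) :=
  stmt_2_general K hKsa hKpsd F hF L hL hf' τ γ ε hτ hγ hε A B hA φ μc hscheme1 hscheme2 hAcond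
    hBcond
end

section
/- Let K be a self-adjoint positive-semidefinite linear map on a finite-dimensional real inner product space V, and let τ, γ, ε > 0 and A, B ≥ 0. Then the linear map Id + γτB·K + γτ(ε/2 + Aτ)·K² is positive definite, hence bijective. Consequently, for any given φ^n, φ^{n−1} ∈ V there exists a unique pair (φ^{n+1}, μ^{n+1/2}) ∈ V × V satisfying the SL-CN step: (φ^{n+1} − φ^n)/τ = −γ K μ^{n+1/2} and μ^{n+1/2} = ε K((φ^{n+1} + φ^n)/2) + (1/ε) g + A τ K(φ^{n+1} − φ^n) + B(φ^{n+1} − 2φ^n + φ^{n−1}), for any fixed vector g ∈ V (in the scheme, g = f((3/2)φ^n − (1/2)φ^{n−1}) applied entrywise). -/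
open scoped RealInnerProductSpace

/-- Unique solvability of each SL-CN time step: eliminating the chemical potential shows
the system operator is `Id + γτB·K + γτ(ε/2 + Aτ)·K²`, which is positive definite (hence
bijective) since `K` is self-adjoint positive semidefinite; consequently each time step
has a unique solution `(φⁿ⁺¹, μⁿ⁺¹ᐟ²)`. -/
theorem stmt_7 {V : Type*} [NormedAddCommGroup V] [InnerProductSpace ℝ V]
    [FiniteDimensional ℝ V]
    (K : V →ₗ[ℝ] V)
    (hKsa : ∀ x y : V, ⟪K x, y⟫ = ⟪x, K y⟫)
    (hKpsd : ∀ x : V, 0 ≤ ⟪K x, x⟫)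
    (τ γ ε : ℝ) (hτ : 0 < τ) (hγ : 0 < γ) (hε : 0 < ε)
    (A B : ℝ) (hA : 0 ≤ A) (hB : 0 ≤ B) :
    (∀ x : V, x ≠ 0 →
      0 < ⟪(LinearMap.id + (γ * τ * B) • K + (γ * τ * (ε/2 + A * τ)) • (K ∘ₗ K) : V →ₗ[ℝ] V) x, x⟫) ∧
    Function.Bijective
      (LinearMap.id + (γ * τ * B) • K + (γ * τ * (ε/2 + A * τ)) • (K ∘ₗ K) : V →ₗ[ℝ] V) ∧
    ∀ φn φm g : V, ∃! p : V × V,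
      (1/τ) • (p.1 - φn) = -γ • K p.2 ∧
      p.2 = ε • K ((1/2 : ℝ) • (p.1 + φn)) + (1/ε) • g + (A * τ) • K (p.1 - φn) +
        B • (p.1 - (2:ℝ) • φn + φm) := by
  set L : V →ₗ[ℝ] V :=
    LinearMap.id + (γ * τ * B) • K + (γ * τ * (ε/2 + A * τ)) • (K ∘ₗ K) with hL
  have hpos : ∀ x : V, x ≠ 0 → 0 < ⟪L x, x⟫ := by
    intro x hx
    have hLx : L x = x + (γ * τ * B) • K x + (γ * τ * (ε/2 + A * τ)) • K (K x) := by
      simp [hL, LinearMap.add_apply, LinearMap.smul_apply, LinearMap.comp_apply]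
    rw [hLx, inner_add_left, inner_add_left, real_inner_smul_left, real_inner_smul_left,
      hKsa (K x) x]
    have h1 : 0 < ⟪x, x⟫ := by
      rw [real_inner_self_eq_norm_sq]
      have : ‖x‖ ≠ 0 := norm_ne_zero_iff.mpr hx
      positivity
    have h2 : 0 ≤ γ * τ * B * ⟪K x, x⟫ := by
      apply mul_nonneg (by positivity) (hKpsd x)
    have h3 : 0 ≤ γ * τ * (ε/2 + A * τ) * ⟪K x, K x⟫ := by
      apply mul_nonneg (by positivity) real_inner_self_nonneg
    linarith
  have hinj : Function.Injective L := by
    rw [← LinearMap.ker_eq_bot, LinearMap.ker_eq_bot']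
    intro x hx0
    by_contra hx
    have := hpos x hx
    rw [hx0, inner_zero_left] at this
    exact lt_irrefl 0 this
  have hbij : Function.Bijective L :=
    ⟨hinj, (LinearMap.injective_iff_surjective).mp hinj⟩
  refine ⟨hpos, hbij, ?_⟩
  intro φn φm g
  -- right-hand side after eliminating μ
  set b : V := φn - (γ * τ * (ε/2 - A * τ)) • K (K φn) - (γ * τ * (1/ε)) • K g
      - (γ * τ * B) • (K φm - (2:ℝ) • K φn) with hb
  obtain ⟨φ, hφ⟩ := hbij.2 b
  have hφ' : φ + (γ * τ * B) • K φ + (γ * τ * (ε/2 + A * τ)) • K (K φ) = b := by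
    rw [← hφ]; simp [hL, LinearMap.add_apply, LinearMap.smul_apply, LinearMap.comp_apply]
  set μ : V := ε • K ((1/2 : ℝ) • (φ + φn)) + (1/ε) • g + (A * τ) • K (φ - φn) +
      B • (φ - (2:ℝ) • φn + φm) with hμ
  have hτ' : τ ≠ 0 := hτ.ne'
  -- key identity for existence
  have A1 : φ - φn = (-(γ * τ)) • K μ := by
    rw [hμ]
    simp only [map_add, map_smul, map_sub, hb] at hφ' ⊢
    linear_combination (norm := module) hφ'
  refine ⟨(φ, μ), ⟨?_, hμ⟩, ?_⟩
  · -- first equation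
    show (1/τ) • (φ - φn) = -γ • K μ
    rw [A1, smul_smul, show 1/τ * -(γ * τ) = -γ by field_simp]
  · rintro ⟨φ', μ'⟩ ⟨e1, e2⟩
    simp only at e1 e2
    have e1' : φ' - φn = (-(γ * τ)) • K μ' := by
      have := congrArg (fun v => τ • v) e1
      simp only [smul_smul] at this
      rw [show τ * (1/τ) = 1 by field_simp, one_smul] at this
      rw [this, show τ * -γ = -(γ * τ) by ring]
    -- show L φ' = b
    have hφ'' : φ' + (γ * τ * B) • K φ' + (γ * τ * (ε/2 + A * τ)) • K (K φ') = b := by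
      rw [e2] at e1'
      simp only [map_add, map_smul, map_sub, hb] at e1' ⊢
      linear_combination (norm := module) e1'
    have hLφ' : L φ' = b := by
      rw [show L φ' = φ' + (γ * τ * B) • K φ' + (γ * τ * (ε/2 + A * τ)) • K (K φ') from by
        simp [hL, LinearMap.add_apply, LinearMap.smul_apply, LinearMap.comp_apply]]
      exact hφ''
    have hφeq : φ' = φ := hinj (by rw [hLφ', hφ])
    have hμeq : μ' = μ := by rw [e2, hφeq, hμ]
    exact Prod.ext hφeq hμeq
end

section
/- Let X be a real Banach space, τ > 0, t ∈ ℝ, and let f : ℝ → X be twice continuously differentiable on [t − τ, t + τ/2]. Then ‖(3/2)·f(t) − (1/2)·f(t − τ) − f(t + τ/2)‖² ≤ τ³ · ∫_{t−τ}^{t+τ/2} ‖f''(s)‖² ds. -/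
/-!
Expanding `f (t - τ)` and `f (t + τ/2)` to first order about `t`, the extrapolation error is
`E₁/2 - E₂`, where the Taylor remainders satisfy `‖E₁‖ ≤ τ ∫_{t-τ}^t ‖f''‖` and
`‖E₂‖ ≤ (τ/2) ∫_t^{t+τ/2} ‖f''‖`. Hence the error is at most `(τ/2) ∫_{t-τ}^{t+τ/2} ‖f''‖`,
and Cauchy–Schwarz on an interval of length `3τ/2` bounds its square by `(3/8) τ³ ∫ ‖f''‖²`.
-/

open MeasureTheory Set

theorem sq_intervalIntegral_le_mul_integral_sq {g : ℝ → ℝ} {a b : ℝ} (hab : a ≤ b)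
    (hg : IntervalIntegrable g volume a b)
    (hg2 : IntervalIntegrable (fun s => g s ^ 2) volume a b) :
    (∫ s in a..b, g s) ^ 2 ≤ (b - a) * ∫ s in a..b, g s ^ 2 := by
  rcases hab.eq_or_lt with rfl | hlt
  · simp
  set A := ∫ s in a..b, g s
  set m := A / (b - a)
  have hL : 0 < b - a := sub_pos.mpr hlt
  -- the variance of `g` about its mean `m` is nonnegative
  have hvar : 0 ≤ ∫ s in a..b, (g s - m) ^ 2 :=
    intervalIntegral.integral_nonneg hab fun _ _ => sq_nonneg _
  have hexpand : ∫ s in a..b, (g s - m) ^ 2 = (∫ s in a..b, g s ^ 2) - A ^ 2 / (b - a) := by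
    have hpt : ∀ s, (g s - m) ^ 2 = g s ^ 2 - (2 * m) * g s + m ^ 2 := fun s => by ring
    simp_rw [hpt]
    rw [intervalIntegral.integral_add (hg2.sub (hg.const_mul _)) intervalIntegrable_const,
      intervalIntegral.integral_sub hg2 (hg.const_mul _), intervalIntegral.integral_const_mul]
    simp only [intervalIntegral.integral_const, smul_eq_mul, m]
    field_simp
    ring
  rw [hexpand, sub_nonneg, div_le_iff₀ hL] at hvar
  linarith

section

variable {X : Type*} [NormedAddCommGroup X] [NormedSpace ℝ X] {F F' F'' : ℝ → X} {a b : ℝ}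

theorem hasDerivWithinAt_Icc_of_subset
    (hF : ∀ s ∈ Icc a b, HasDerivWithinAt F (F' s) (Icc a b) s) {c d : ℝ}
    (hac : a ≤ c) (hdb : d ≤ b) : ∀ s ∈ Icc c d, HasDerivWithinAt F (F' s) (Icc c d) s :=
  fun s hs => (hF s (Icc_subset_Icc hac hdb hs)).mono (Icc_subset_Icc hac hdb)

variable [CompleteSpace X]

theorem integral_eq_sub_of_hasDerivWithinAt_Icc
    (hF : ∀ s ∈ Icc a b, HasDerivWithinAt F (F' s) (Icc a b) s)
    (hF' : ContinuousOn F' (Icc a b)) {u v : ℝ} (hu : u ∈ Icc a b) (hv : v ∈ Icc a b) :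
    ∫ s in u..v, F' s = F v - F u := by
  have hsub : uIcc u v ⊆ Icc a b := uIcc_subset_Icc hu hv
  refine intervalIntegral.integral_eq_sub_of_hasDeriv_right
    (fun s hs => (hF s (hsub hs)).continuousWithinAt.mono hsub) (fun s hs => ?_)
    ((hF'.mono hsub).intervalIntegrable)
  have hs' : s ∈ Ioo a b :=
    ⟨(le_min hu.1 hv.1).trans_lt hs.1, hs.2.trans_le (max_le hu.2 hv.2)⟩
  exact ((hF s (Ioo_subset_Icc_self hs')).hasDerivAt
    (Icc_mem_nhds hs'.1 hs'.2)).hasDerivWithinAt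

theorem norm_sub_le_integral_norm_deriv
    (hF : ∀ s ∈ Icc a b, HasDerivWithinAt F (F' s) (Icc a b) s)
    (hF' : ContinuousOn F' (Icc a b)) {u v : ℝ} (hu : u ∈ Icc a b) (hv : v ∈ Icc a b) :
    ‖F v - F u‖ ≤ ∫ s in a..b, ‖F' s‖ := by
  wlog huv : u ≤ v generalizing u v
  · rw [norm_sub_rev]
    exact this hv hu (le_of_not_ge huv)
  rw [← integral_eq_sub_of_hasDerivWithinAt_Icc hF hF' hu hv]
  have hint : IntervalIntegrable (fun s => ‖F' s‖) volume a b :=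
    hF'.norm.intervalIntegrable_of_Icc (hu.1.trans hu.2)
  exact (intervalIntegral.norm_integral_le_integral_norm huv).trans
    (intervalIntegral.integral_mono_interval hu.1 huv hv.2
      (ae_of_all _ fun _ => norm_nonneg _) hint)

theorem norm_sub_sub_smul_deriv_le
    (hF : ∀ s ∈ Icc a b, HasDerivWithinAt F (F' s) (Icc a b) s)
    (hF' : ∀ s ∈ Icc a b, HasDerivWithinAt F' (F'' s) (Icc a b) s)
    (hF'' : ContinuousOn F'' (Icc a b)) {z : ℝ} (hz : z ∈ Icc a b) :
    ‖F b - F a - (b - a) • F' z‖ ≤ (b - a) * ∫ s in a..b, ‖F'' s‖ := by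
  have hab : a ≤ b := hz.1.trans hz.2
  have hF'cont : ContinuousOn F' (Icc a b) := fun s hs => (hF' s hs).continuousWithinAt
  have hrepr : F b - F a - (b - a) • F' z = ∫ s in a..b, (F' s - F' z) := by
    rw [intervalIntegral.integral_sub (hF'cont.intervalIntegrable_of_Icc hab)
      intervalIntegrable_const, intervalIntegral.integral_const,
      integral_eq_sub_of_hasDerivWithinAt_Icc hF hF'cont (left_mem_Icc.2 hab)
        (right_mem_Icc.2 hab)]
  rw [hrepr, mul_comm]
  refine (intervalIntegral.norm_integral_le_of_norm_le_const fun s hs => ?_).trans_eq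
    (by rw [abs_of_nonneg (sub_nonneg.2 hab)])
  rw [uIoc_of_le hab] at hs
  exact norm_sub_le_integral_norm_deriv hF' hF'' hz (Ioc_subset_Icc_self hs)

theorem norm_extrapolation_error_le {τ t : ℝ} (hτ : 0 ≤ τ)
    (hf : ∀ s ∈ Icc (t - τ) (t + τ/2),
      HasDerivWithinAt F (F' s) (Icc (t - τ) (t + τ/2)) s)
    (hf' : ∀ s ∈ Icc (t - τ) (t + τ/2),
      HasDerivWithinAt F' (F'' s) (Icc (t - τ) (t + τ/2)) s)
    (hf'' : ContinuousOn F'' (Icc (t - τ) (t + τ/2))) :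
    ‖(3/2 : ℝ) • F t - (1/2 : ℝ) • F (t - τ) - F (t + τ/2)‖ ≤
      τ / 2 * ∫ s in (t - τ)..(t + τ/2), ‖F'' s‖ := by
  have hat : t - τ ≤ t := by linarith
  have htb : t ≤ t + τ/2 := by linarith
  have hleft := norm_sub_sub_smul_deriv_le (hasDerivWithinAt_Icc_of_subset hf le_rfl htb)
    (hasDerivWithinAt_Icc_of_subset hf' le_rfl htb) (hf''.mono (Icc_subset_Icc le_rfl htb))
    (right_mem_Icc.2 hat)
  have hright := norm_sub_sub_smul_deriv_le (hasDerivWithinAt_Icc_of_subset hf hat le_rfl)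
    (hasDerivWithinAt_Icc_of_subset hf' hat le_rfl) (hf''.mono (Icc_subset_Icc hat le_rfl))
    (left_mem_Icc.2 htb)
  rw [sub_sub_cancel] at hleft
  rw [add_sub_cancel_left] at hright
  have hsplit : (3/2 : ℝ) • F t - (1/2 : ℝ) • F (t - τ) - F (t + τ/2) =
      (1/2 : ℝ) • (F t - F (t - τ) - τ • F' t) - (F (t + τ/2) - F t - (τ/2) • F' t) := by
    module
  rw [hsplit, ← intervalIntegral.integral_add_adjacent_intervals (b := t)
    ((hf''.mono (Icc_subset_Icc le_rfl htb)).norm.intervalIntegrable_of_Icc hat)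
    ((hf''.mono (Icc_subset_Icc hat le_rfl)).norm.intervalIntegrable_of_Icc htb)]
  calc _ ≤ 1/2 * ‖F t - F (t - τ) - τ • F' t‖ + ‖F (t + τ/2) - F t - (τ/2) • F' t‖ := by
        refine (norm_sub_le _ _).trans_eq ?_
        rw [norm_smul, Real.norm_of_nonneg (by norm_num)]
    _ ≤ 1/2 * (τ * ∫ s in (t - τ)..t, ‖F'' s‖) + τ / 2 * ∫ s in t..(t + τ/2), ‖F'' s‖ := by
        gcongr
    _ = _ := by ring

end

/-- Truncation-error estimate for the extrapolation term
`R₅ = (3/2)f(t) − (1/2)f(t−τ) − f(t+τ/2)` (estimate (e7-2) in the SL-CN error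
analysis): if `f` is twice continuously differentiable on `[t−τ, t+τ/2]` then
`‖(3/2)f(t) − (1/2)f(t−τ) − f(t+τ/2)‖² ≤ τ³ ∫_{t−τ}^{t+τ/2} ‖f''(s)‖² ds`. -/
theorem stmt_10 {X : Type*} [NormedAddCommGroup X] [NormedSpace ℝ X] [CompleteSpace X]
    (τ t : ℝ) (hτ : 0 < τ) (f f' f'' : ℝ → X)
    (hf' : ∀ s ∈ Set.Icc (t - τ) (t + τ/2),
      HasDerivWithinAt f (f' s) (Set.Icc (t - τ) (t + τ/2)) s)
    (hf'' : ∀ s ∈ Set.Icc (t - τ) (t + τ/2),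
      HasDerivWithinAt f' (f'' s) (Set.Icc (t - τ) (t + τ/2)) s)
    (hcont : ContinuousOn f'' (Set.Icc (t - τ) (t + τ/2))) :
    ‖(3/2 : ℝ) • f t - (1/2 : ℝ) • f (t - τ) - f (t + τ/2)‖^2 ≤
      τ^3 * ∫ s in (t - τ)..(t + τ/2), ‖f'' s‖^2 := by
  have hab : t - τ ≤ t + τ/2 := by linarith
  have hL1 := norm_extrapolation_error_le hτ.le hf' hf'' hcont
  have hCS := sq_intervalIntegral_le_mul_integral_sq hab
    (hcont.norm.intervalIntegrable_of_Icc hab) ((hcont.norm.pow 2).intervalIntegrable_of_Icc hab)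
  have hJ : 0 ≤ ∫ s in (t - τ)..(t + τ/2), ‖f'' s‖^2 :=
    intervalIntegral.integral_nonneg hab fun _ _ => sq_nonneg _
  calc _ ≤ (τ / 2 * ∫ s in (t - τ)..(t + τ/2), ‖f'' s‖) ^ 2 :=
        pow_le_pow_left₀ (norm_nonneg _) hL1 2
    _ = τ ^ 2 / 4 * (∫ s in (t - τ)..(t + τ/2), ‖f'' s‖) ^ 2 := by ring
    _ ≤ τ ^ 2 / 4 * ((t + τ/2 - (t - τ)) * ∫ s in (t - τ)..(t + τ/2), ‖f'' s‖^2) := by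
        gcongr
    _ = 3 / 8 * τ ^ 3 * ∫ s in (t - τ)..(t + τ/2), ‖f'' s‖^2 := by ring
    _ ≤ _ := by gcongr; nlinarith [pow_pos hτ 3]
end
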